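/- arXiv:2502.21128 — 2 statements merged into one kernel-verified Lean document; each statement's English description precedes it below -/
import Mathlib

section
/- For every integer m ≥ 1, every real number σ, and all complex numbers x, y, the following identity holds: (−1)^m · m! · L_m^{(1)}(|x+y|²; σ) · (x+y) = Σ_{j₁=0}^{m+1} Σ_{j₂=0}^{m} C(m+1, j₁) · C(m, j₂) · P^{m,σ}_{j₁,j₂}(y) · x^{j₁} · conj(x)^{j₂}, where P^{m,σ}_{j₁,j₂}(y) = (−1)^{m−j₂} · (m−j₂)! · L^{(j₂−j₁+1)}_{m−j₂}(|y|²; σ) · y^{j₂−j₁+1} when j₂ + 1 ≥ j₁, and P^{m,σ}_{j₁,j₂}(y) = (−1)^{m+1−j₁} · (m+1−j₁)! · L^{(j₁−j₂−1)}_{m+1−j₁}(|y|²; σ) · conj(y)^{j₁−j₂−1} when j₂ + 1 < j₁. -/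
/-!
Both sides are the complex Hermite polynomial
`H_{p,q}(z; σ) = ∑ₖ (-1)ᵏ k! C(p,k) C(q,k) σᵏ z^{p-k} z̄^{q-k}` with `(p, q) = (m + 1, m)`,
evaluated at `z = x + y`. Since `H_{q+l,q}(z; σ) = (-1)^q q! L_q^{(l)}(|z|²; σ) zˡ`, the left side is
`H_{m+1,m}(x + y; σ)`. Expanding `(x + y)^{p-k}` and `(x̄ + ȳ)^{q-k}` binomially gives
`H_{p,q}(x + y) = ∑ C(p,j₁) C(q,j₂) H_{p-j₁,q-j₂}(y) x^{j₁} x̄^{j₂}`, and `H_{m+1-j₁,m-j₂}(y)` is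
`P^{m,σ}_{j₁,j₂}(y)`: directly when `j₁ ≤ j₂ + 1`, and through `H_{p,q} = conj H_{q,p}` otherwise.
-/

open Finset

/-- Scaled generalized Laguerre polynomial
`L_k^{(ℓ)}(x; σ) = ∑_{i=0}^{k} (−1)^i C(k+ℓ, k−i) σ^{k−i} x^i / i!`. -/
noncomputable def scaledLaguerre (k l : ℕ) (σ : ℝ) (x : ℝ) : ℝ :=
  ∑ i ∈ Finset.range (k + 1),
    (-1) ^ i * ((k + l).choose (k - i)) * σ ^ (k - i) * x ^ i / (i.factorial)

/-- The coefficient `P^{m,σ}_{j₁,j₂}(y)` from Lemma 3.1. -/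
noncomputable def Pcoef (m : ℕ) (σ : ℝ) (j₁ j₂ : ℕ) (y : ℂ) : ℂ :=
  if j₁ ≤ j₂ + 1 then
    (-1 : ℂ) ^ (m - j₂) * ((m - j₂).factorial : ℂ) *
      ((scaledLaguerre (m - j₂) (j₂ + 1 - j₁) σ (‖y‖ ^ 2) : ℝ) : ℂ) *
      y ^ (j₂ + 1 - j₁)
  else
    (-1 : ℂ) ^ (m + 1 - j₁) * ((m + 1 - j₁).factorial : ℂ) *
      ((scaledLaguerre (m + 1 - j₁) (j₁ - j₂ - 1) σ (‖y‖ ^ 2) : ℝ) : ℂ) *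
      (starRingEnd ℂ y) ^ (j₁ - j₂ - 1)

open ComplexConjugate

theorem Nat.choose_mul_choose_sub_comm (n a b : ℕ) :
    n.choose a * (n - a).choose b = n.choose b * (n - b).choose a := by
  have ha := Nat.choose_mul (n := n) (k := a + b) (s := a) (by omega)
  have hb := Nat.choose_mul (n := n) (k := a + b) (s := b) (by omega)
  rw [Nat.add_sub_cancel_left] at ha
  rw [Nat.add_sub_cancel] at hb
  rw [← ha, ← hb, Nat.choose_symm_add]

theorem add_pow_eq_sum_range {R : Type*} [CommSemiring R] (a b : R) {n N : ℕ} (hN : n < N) :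
    (a + b) ^ n = ∑ j ∈ range N, a ^ j * b ^ (n - j) * n.choose j := by
  rw [add_pow]
  refine sum_subset (range_subset_range.2 hN) fun j _ hj => ?_
  rw [mem_range, not_lt] at hj
  rw [Nat.choose_eq_zero_of_lt hj, Nat.cast_zero, mul_zero]

noncomputable def complexHermiteTerm (p q : ℕ) (σ : ℝ) (z : ℂ) (k : ℕ) : ℂ :=
  (-1) ^ k * k.factorial * p.choose k * q.choose k * (σ : ℂ) ^ k * z ^ (p - k) * conj z ^ (q - k)

noncomputable def complexHermite (p q : ℕ) (σ : ℝ) (z : ℂ) : ℂ :=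
  ∑ k ∈ range (q + 1), complexHermiteTerm p q σ z k

theorem complexHermite_eq_sum_range (p q : ℕ) (σ : ℝ) (z : ℂ) {N : ℕ} (hN : q < N) :
    complexHermite p q σ z = ∑ k ∈ range N, complexHermiteTerm p q σ z k := by
  refine sum_subset (range_subset_range.2 hN) fun k _ hk => ?_
  rw [mem_range, not_lt] at hk
  simp [complexHermiteTerm, Nat.choose_eq_zero_of_lt hk]

theorem complexHermite_eq_conj (p q : ℕ) (σ : ℝ) (z : ℂ) :
    complexHermite p q σ z = conj (complexHermite q p σ z) := by
  rw [complexHermite_eq_sum_range p q σ z (N := p + q + 1) (by omega),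
    complexHermite_eq_sum_range q p σ z (N := p + q + 1) (by omega), map_sum]
  refine sum_congr rfl fun k _ => ?_
  simp only [complexHermiteTerm, map_mul, map_pow, map_neg, map_one, Complex.conj_conj,
    Complex.conj_ofReal, map_natCast]
  ring

theorem complexHermite_add_left_eq_scaledLaguerre (q l : ℕ) (σ : ℝ) (z : ℂ) :
    complexHermite (q + l) q σ z =
      (-1) ^ q * q.factorial * (scaledLaguerre q l σ (‖z‖ ^ 2) : ℂ) * z ^ l := by
  have hnorm : ((‖z‖ : ℝ) : ℂ) ^ 2 = z * conj z := by
    rw [← Complex.ofReal_pow, Complex.sq_norm, ← Complex.mul_conj]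
  unfold complexHermite scaledLaguerre
  push_cast
  rw [mul_sum, sum_mul, ← sum_range_reflect]
  refine sum_congr rfl fun i hi => ?_
  rw [mem_range] at hi
  have hiq : i ≤ q := by omega
  rw [show q + 1 - 1 - i = q - i by omega]
  unfold complexHermiteTerm
  rw [Nat.sub_sub_self hiq, show q + l - (q - i) = l + i by omega, Nat.choose_symm hiq]
  have hsign : (-1 : ℂ) ^ (q - i) = (-1) ^ q * (-1) ^ i := by
    rw [← pow_sub_mul_pow (-1 : ℂ) hiq, mul_assoc, ← pow_add, ← two_mul, pow_mul, neg_one_sq,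
      one_pow, mul_one]
  have hfact : (q.choose i * i.factorial * (q - i).factorial : ℂ) = q.factorial := by
    exact_mod_cast Nat.choose_mul_factorial_mul_factorial hiq
  have hi_fact : (i.factorial : ℂ) ≠ 0 := Nat.cast_ne_zero.2 i.factorial_ne_zero
  rw [hsign, hnorm, ← hfact]
  field_simp
  ring

theorem complexHermiteTerm_add (p q : ℕ) (σ : ℝ) (x y : ℂ) (k : ℕ) :
    complexHermiteTerm p q σ (x + y) k =
      ∑ j₁ ∈ range (p + 1), ∑ j₂ ∈ range (q + 1),
        p.choose j₁ * q.choose j₂ * complexHermiteTerm (p - j₁) (q - j₂) σ y k *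
          x ^ j₁ * conj x ^ j₂ := by
  unfold complexHermiteTerm
  rw [map_add, add_pow_eq_sum_range x y (N := p + 1) (by omega),
    add_pow_eq_sum_range (conj x) (conj y) (N := q + 1) (by omega), mul_assoc, sum_mul_sum,
    mul_sum]
  refine sum_congr rfl fun j₁ _ => ?_
  rw [mul_sum]
  refine sum_congr rfl fun j₂ _ => ?_
  have hp : (p.choose k * (p - k).choose j₁ : ℂ) = p.choose j₁ * (p - j₁).choose k := by
    exact_mod_cast Nat.choose_mul_choose_sub_comm p k j₁
  have hq : (q.choose k * (q - k).choose j₂ : ℂ) = q.choose j₂ * (q - j₂).choose k := by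
    exact_mod_cast Nat.choose_mul_choose_sub_comm q k j₂
  rw [show p - k - j₁ = p - j₁ - k by omega, show q - k - j₂ = q - j₂ - k by omega]
  linear_combination (-1 : ℂ) ^ k * k.factorial * (σ : ℂ) ^ k * x ^ j₁ * y ^ (p - j₁ - k) *
    conj x ^ j₂ * conj y ^ (q - j₂ - k) *
    (q.choose k * (q - k).choose j₂ * hp + p.choose j₁ * (p - j₁).choose k * hq)

theorem complexHermite_add (p q : ℕ) (σ : ℝ) (x y : ℂ) :
    complexHermite p q σ (x + y) =
      ∑ j₁ ∈ range (p + 1), ∑ j₂ ∈ range (q + 1),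
        p.choose j₁ * q.choose j₂ * complexHermite (p - j₁) (q - j₂) σ y *
          x ^ j₁ * conj x ^ j₂ := by
  rw [complexHermite]
  simp_rw [complexHermiteTerm_add]
  rw [sum_comm]
  refine sum_congr rfl fun j₁ _ => ?_
  rw [sum_comm]
  refine sum_congr rfl fun j₂ hj₂ => ?_
  rw [mem_range] at hj₂
  rw [complexHermite_eq_sum_range _ _ σ y (N := q + 1) (by omega), mul_sum, sum_mul, sum_mul]

theorem complexHermite_eq_Pcoef (m : ℕ) (σ : ℝ) {j₁ j₂ : ℕ} (h₁ : j₁ ≤ m + 1) (h₂ : j₂ ≤ m)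
    (y : ℂ) : complexHermite (m + 1 - j₁) (m - j₂) σ y = Pcoef m σ j₁ j₂ y := by
  unfold Pcoef
  split_ifs with h
  · rw [show m + 1 - j₁ = m - j₂ + (j₂ + 1 - j₁) by omega,
      complexHermite_add_left_eq_scaledLaguerre]
  · rw [complexHermite_eq_conj, show m - j₂ = m + 1 - j₁ + (j₁ - j₂ - 1) by omega,
      complexHermite_add_left_eq_scaledLaguerre]
    simp only [map_mul, map_pow, map_neg, map_one, Complex.conj_ofReal, map_natCast]

theorem statement_0_general (m : ℕ) (σ : ℝ) (x y : ℂ) :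
    (-1 : ℂ) ^ m * (m.factorial : ℂ) *
        ((scaledLaguerre m 1 σ (‖x + y‖ ^ 2) : ℝ) : ℂ) * (x + y)
      = ∑ j₁ ∈ Finset.range (m + 2), ∑ j₂ ∈ Finset.range (m + 1),
          ((m + 1).choose j₁ : ℂ) * (m.choose j₂ : ℂ) * Pcoef m σ j₁ j₂ y *
            x ^ j₁ * (starRingEnd ℂ x) ^ j₂ := by
  have hlhs := complexHermite_add_left_eq_scaledLaguerre m 1 σ (x + y)
  rw [pow_one] at hlhs
  rw [← hlhs, complexHermite_add]
  refine sum_congr rfl fun j₁ hj₁ => sum_congr rfl fun j₂ hj₂ => ?_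
  rw [mem_range] at hj₁ hj₂
  rw [complexHermite_eq_Pcoef m σ (by omega) (by omega)]

theorem statement_0 (m : ℕ) (hm : 1 ≤ m) (σ : ℝ) (x y : ℂ) :
    (-1 : ℂ) ^ m * (m.factorial : ℂ) *
        ((scaledLaguerre m 1 σ (‖x + y‖ ^ 2) : ℝ) : ℂ) * (x + y)
      = ∑ j₁ ∈ Finset.range (m + 2), ∑ j₂ ∈ Finset.range (m + 1),
          ((m + 1).choose j₁ : ℂ) * (m.choose j₂ : ℂ) * Pcoef m σ j₁ j₂ y *
            x ^ j₁ * (starRingEnd ℂ x) ^ j₂ :=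
  statement_0_general m σ x y
end

section
/- Let r > 0 and let p be a real number with 2 ≤ p < 2 + 2·(r² + r·√(1+r²)). Then there exists η with 0 < η < 1/8 such that for all real numbers x and y: (1/4 − η)·r·x² + ((p−2)/4)·x·y + ((p−1)/4 − η)·r·y² ≥ 0. -/
theorem statement_12 (r : ℝ) (hr : 0 < r) (p : ℝ) (hp2 : 2 ≤ p)
    (hp : p < 2 + 2 * (r ^ 2 + r * Real.sqrt (1 + r ^ 2))) :
    ∃ η : ℝ, 0 < η ∧ η < 1 / 8 ∧ ∀ x y : ℝ,
      0 ≤ (1 / 4 - η) * r * x ^ 2 + ((p - 2) / 4) * x * y + ((p - 1) / 4 - η) * r * y ^ 2 := by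
  set q := Real.sqrt (1 + r ^ 2) with hq
  have hq2 : q ^ 2 = 1 + r ^ 2 := Real.sq_sqrt (by positivity)
  have hqr : r < q := by nlinarith [Real.sqrt_nonneg (1 + r ^ 2)]
  have hq0 : 0 < q := lt_trans hr hqr
  -- key strict inequality at η = 0
  have hK : 0 < (p - 1) * r ^ 2 / 4 - (p - 2) ^ 2 / 16 := by
    have h1 : 0 < 2 * r ^ 2 + 2 * r * q - (p - 2) := by nlinarith
    have h2 : 0 < (p - 2) + 2 * r * q - 2 * r ^ 2 := by nlinarith
    nlinarith [mul_pos h1 h2]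
  set K := (p - 1) * r ^ 2 / 4 - (p - 2) ^ 2 / 16 with hKdef
  have hden : 0 < 2 * r ^ 2 * p := by nlinarith
  refine ⟨min (1 / 16) (K / (2 * r ^ 2 * p)), ?_, ?_, ?_⟩
  · exact lt_min (by norm_num) (div_pos hK hden)
  · exact lt_of_le_of_lt (min_le_left _ _) (by norm_num)
  · intro x y
    set η := min (1 / 16) (K / (2 * r ^ 2 * p)) with hη
    have hη1 : η ≤ 1 / 16 := min_le_left _ _
    have hη0 : 0 < η := lt_min (by norm_num) (div_pos hK hden)
    have hη2 : 2 * r ^ 2 * p * η ≤ K := by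
      have := min_le_right (1 / 16) (K / (2 * r ^ 2 * p))
      calc 2 * r ^ 2 * p * η ≤ 2 * r ^ 2 * p * (K / (2 * r ^ 2 * p)) := by
            exact mul_le_mul_of_nonneg_left this (le_of_lt hden)
        _ = K := by field_simp
    -- 4ac - b² ≥ K/2 > 0
    clear_value η K
    have ha : 0 < (1 / 4 - η) * r := by
      have : η < 1 / 4 := lt_of_le_of_lt hη1 (by norm_num)
      nlinarith
    have hdisc : 0 ≤ 4 * ((1 / 4 - η) * r) * (((p - 1) / 4 - η) * r) - ((p - 2) / 4) ^ 2 := by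
      nlinarith [hη2, hK, hKdef, mul_nonneg (sq_nonneg r) (sq_nonneg η)]
    nlinarith [sq_nonneg (2 * ((1 / 4 - η) * r) * x + ((p - 2) / 4) * y),
      mul_nonneg hdisc (sq_nonneg y), ha, sq_nonneg y]
end
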